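/- The minimum value of K(y) = -96 e^{2y}(e^{8y} + 2e^{6y} + 18e^{4y} + 2e^{2y} + 1)/(e^{4y} + 10e^{2y} + 1)^3 over y > 0 is -5/3, attained exactly at y = log(2 + √3). -/
import Mathlib


open Real Filter

noncomputable def K (y : ℝ) : ℝ :=
  -(96 * Real.exp (2*y) *
      (Real.exp (8*y) + 2 * Real.exp (6*y) + 18 * Real.exp (4*y) +
        2 * Real.exp (2*y) + 1)) /
    (Real.exp (4*y) + 10 * Real.exp (2*y) + 1)^3

lemma K_eq (y : ℝ) :
    K y = -(96 * Real.exp (2*y) *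
      ((Real.exp (2*y))^4 + 2 * (Real.exp (2*y))^3 + 18 * (Real.exp (2*y))^2 +
        2 * Real.exp (2*y) + 1)) /
    ((Real.exp (2*y))^2 + 10 * Real.exp (2*y) + 1)^3 := by
  have h8 : Real.exp (8*y) = (Real.exp (2*y))^4 := by
    rw [← Real.exp_nat_mul]; norm_num; ring_nf
  have h6 : Real.exp (6*y) = (Real.exp (2*y))^3 := by
    rw [← Real.exp_nat_mul]; norm_num; ring_nf
  have h4 : Real.exp (4*y) = (Real.exp (2*y))^2 := by
    rw [← Real.exp_nat_mul]; norm_num; ring_nf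
  rw [K, h8, h6, h4]

theorem stmt_4 :
    K (Real.log (2 + Real.sqrt 3)) = -5/3 ∧
    (∀ y : ℝ, 0 < y → -5/3 ≤ K y) ∧
    (∀ y : ℝ, 0 < y → K y = -5/3 → y = Real.log (2 + Real.sqrt 3)) := by
  set s := Real.sqrt 3 with hs_def
  have hs : s^2 = 3 := Real.sq_sqrt (by norm_num)
  have hs0 : 0 ≤ s := Real.sqrt_nonneg 3
  have hs17 : (1.7:ℝ) < s := by nlinarith
  have hpos : (0:ℝ) < 2 + s := by linarith
  have hexplog : Real.exp (Real.log (2 + s)) = 2 + s := Real.exp_log hpos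
  refine ⟨?_, ?_, ?_⟩
  · -- value at log(2+√3)
    rw [K_eq]
    set y₀ := Real.log (2 + s) with hy0
    have h2 : Real.exp (2*y₀) = (2+s)^2 := by
      rw [two_mul, Real.exp_add, hexplog]; ring
    set t := Real.exp (2*y₀) with ht_def
    have ht : t^2 = 14*t - 1 := by
      rw [h2]; linear_combination (s^2 + 8*s + 13) * hs
    have htpos : 0 < t := Real.exp_pos _
    have hd : (t^2 + 10*t + 1) ≠ 0 := by nlinarith
    rw [div_eq_iff (by positivity)]
    linear_combination (5/3*t^4 - 68/3*t^3 - 6*t^2 - 68/3*t + 5/3) * ht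
  · -- lower bound
    intro y hy
    rw [K_eq]
    set t := Real.exp (2*y) with ht_def
    have ht1 : 1 < t := by
      rw [ht_def, show (1:ℝ) = Real.exp 0 by simp]
      exact Real.exp_lt_exp.2 (by linarith)
    have hd : (0:ℝ) < (t^2 + 10*t + 1)^3 := by positivity
    rw [le_div_iff₀ hd]
    nlinarith [mul_nonneg (sq_nonneg (t^2 - 14*t + 1))
      (show (0:ℝ) ≤ 5*t^2 + 2*t + 5 by nlinarith)]
  · -- uniqueness
    intro y hy hK
    rw [K_eq] at hK
    set t := Real.exp (2*y) with ht_def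
    have ht1 : 1 < t := by
      rw [ht_def, show (1:ℝ) = Real.exp 0 by simp]
      exact Real.exp_lt_exp.2 (by linarith)
    have hd : (0:ℝ) < (t^2 + 10*t + 1)^3 := by positivity
    rw [div_eq_iff (ne_of_gt hd)] at hK
    have h0 : (t^2 - 14*t + 1)^2 * (5*t^2 + 2*t + 5) = 0 := by
      linear_combination 3 * hK
    have hq : t^2 - 14*t + 1 = 0 := by
      rcases mul_eq_zero.1 h0 with h | h
      · exact pow_eq_zero_iff (n := 2) (by norm_num) |>.1 h
      · nlinarith
    have h1 : (t - (7 + 4*s)) * (t - (7 - 4*s)) = 0 := by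
      linear_combination hq - 16 * hs
    have ht7 : t = 7 + 4*s := by
      rcases mul_eq_zero.1 h1 with h | h
      · linarith
      · nlinarith
    have hval : Real.exp (2 * Real.log (2 + s)) = (2+s)^2 := by
      rw [two_mul, Real.exp_add, hexplog]; ring
    have h2 : Real.exp (2*y) = Real.exp (2 * Real.log (2 + s)) := by
      rw [hval, ← ht_def, ht7]; linear_combination -hs
    have := Real.exp_injective h2
    linarith
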